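/- Let Ω be a compact Hausdorff space, let E and F be real Banach spaces, and let T : C(Ω, E) → F be a nuclear operator. Then for every f ∈ C(Ω), the nuclear operator T^#(f) : E → F, e ↦ T(f ⊗ e), satisfies ‖T^#(f)‖_nuc ≤ ‖f‖_∞ · ‖T‖_nuc. (Quantitative form of Theorem 3.) -/

import Mathlib

open MeasureTheory Filter Topology

section Defs

variable {X Y : Type*} [NormedAddCommGroup X] [NormedSpace ℝ X]
  [NormedAddCommGroup Y] [NormedSpace ℝ Y]

/-- A bounded linear operator is nuclear if it admits a representation
`S x = Σ_n x'_n(x) • y_n` with `Σ_n ‖x'_n‖·‖y_n‖ < ∞`. -/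
def IsNuclear (S : X →L[ℝ] Y) : Prop :=
  ∃ (x' : ℕ → (X →L[ℝ] ℝ)) (y : ℕ → Y),
    Summable (fun n => ‖x' n‖ * ‖y n‖) ∧ ∀ x, HasSum (fun n => x' n x • y n) (S x)

/-- The nuclear norm: the infimum of `Σ_n ‖x'_n‖·‖y_n‖` over all nuclear
representations of `S`. -/
noncomputable def nuclearNorm (S : X →L[ℝ] Y) : ℝ :=
  sInf {c : ℝ | ∃ (x' : ℕ → (X →L[ℝ] ℝ)) (y : ℕ → Y),
    Summable (fun n => ‖x' n‖ * ‖y n‖) ∧ (∀ x, HasSum (fun n => x' n x • y n) (S x)) ∧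
    c = ∑' n, ‖x' n‖ * ‖y n‖}

variable {Ω : Type*} [TopologicalSpace Ω]

/-- The elementary tensor `f ⊗ e : ω ↦ f(ω) • e` in `C(Ω, E)`. -/
noncomputable def tensor (f : C(Ω, ℝ)) (e : X) : C(Ω, X) :=
  ⟨fun ω => f ω • e, (map_continuous f).smul continuous_const⟩

theorem tensor_apply (f : C(Ω, ℝ)) (e : X) (ω : Ω) : tensor f e ω = f ω • e := rfl

variable [CompactSpace Ω]

theorem norm_tensor_le (f : C(Ω, ℝ)) (e : X) : ‖tensor f e‖ ≤ ‖f‖ * ‖e‖ := by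
  refine (ContinuousMap.norm_le _ (by positivity)).2 fun ω => ?_
  rw [tensor_apply, norm_smul]
  exact mul_le_mul_of_nonneg_right (f.norm_coe_le_norm ω) (norm_nonneg e)

/-- The operator `T^# f : E → F`, `e ↦ T (f ⊗ e)`, induced by `T : C(Ω,E) → F`. -/
noncomputable def sharp (T : C(Ω, X) →L[ℝ] Y) (f : C(Ω, ℝ)) : X →L[ℝ] Y :=
  LinearMap.mkContinuous
    { toFun := fun e => T (tensor f e)
      map_add' := fun a b => by
        show T (tensor f (a + b)) = T (tensor f a) + T (tensor f b)
        rw [show tensor f (a + b) = tensor f a + tensor f b from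
          ContinuousMap.ext fun ω => smul_add _ _ _, map_add]
      map_smul' := fun c a => by
        show T (tensor f (c • a)) = c • T (tensor f a)
        rw [show tensor f (c • a) = c • tensor f a from
          ContinuousMap.ext fun ω => smul_comm _ _ _, _root_.map_smul] }
    (‖T‖ * ‖f‖)
    (fun e => by
      calc ‖T (tensor f e)‖ ≤ ‖T‖ * ‖tensor f e‖ := T.le_opNorm _
        _ ≤ ‖T‖ * (‖f‖ * ‖e‖) :=
          mul_le_mul_of_nonneg_left (norm_tensor_le f e) (norm_nonneg T)
        _ = ‖T‖ * ‖f‖ * ‖e‖ := (mul_assoc _ _ _).symm)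

theorem sharp_apply (T : C(Ω, X) →L[ℝ] Y) (f : C(Ω, ℝ)) (e : X) :
    sharp T f e = T (tensor f e) := rfl

/-- The set of sums `Σ_i ‖m(A_i)‖` over finite families of pairwise disjoint
measurable subsets of `B`. -/
def partitionSums {S : Type*} [MeasurableSpace S] (m : Set S → X) (B : Set S) : Set ℝ :=
  {c : ℝ | ∃ (k : ℕ) (A : Fin k → Set S), (∀ i, MeasurableSet (A i)) ∧
    Pairwise (Function.onFun Disjoint A) ∧ (∀ i, A i ⊆ B) ∧ c = ∑ i, ‖m (A i)‖}

/-- The variation `|m|(B)` of a vector measure. -/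
noncomputable def variation {S : Type*} [MeasurableSpace S] (m : Set S → X) (B : Set S) : ℝ :=
  sSup (partitionSums m B)

/-- A Banach space `X` has the Radon–Nikodym property if every countably additive
`X`-valued vector measure of bounded variation which is absolutely continuous with
respect to a finite measure `μ` has a Bochner-integrable density with respect to `μ`. -/
def HasRNP (X : Type*) [NormedAddCommGroup X] [NormedSpace ℝ X] : Prop :=
  ∀ (S : Type) (_ : MeasurableSpace S) (μ : Measure S), IsFiniteMeasure μ →
    ∀ m : VectorMeasure S X, BddAbove (partitionSums (⇑m) Set.univ) →
      (∀ A : Set S, MeasurableSet A → μ A = 0 → m A = 0) →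
      ∃ g : S → X, Integrable g μ ∧ ∀ A : Set S, MeasurableSet A → m A = ∫ x in A, g x ∂μ

end Defs

/-! `T^#(f)` is `T ∘ (e ↦ f ⊗ e)`, and `e ↦ f ⊗ e` has operator norm at most `‖f‖`. Precomposing
each functional of a nuclear representation `Σ x'_n ⊗ y_n` of `T` with this map gives a nuclear
representation of `T^#(f)` of cost at most `‖f‖ · Σ ‖x'_n‖‖y_n‖`; taking the infimum gives the
bound. -/

section Nuclear

variable {X Y Z : Type*} [NormedAddCommGroup X] [NormedSpace ℝ X]
  [NormedAddCommGroup Y] [NormedSpace ℝ Y] [NormedAddCommGroup Z] [NormedSpace ℝ Z]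

theorem nuclearNorm_nonneg (S : X →L[ℝ] Y) : 0 ≤ nuclearNorm S :=
  Real.sInf_nonneg fun _ ⟨_, _, _, _, hc⟩ => hc ▸ tsum_nonneg fun _ => by positivity

theorem nuclearNorm_le_tsum {S : X →L[ℝ] Y} {x' : ℕ → X →L[ℝ] ℝ} {y : ℕ → Y}
    (hsum : Summable fun n => ‖x' n‖ * ‖y n‖) (hrep : ∀ x, HasSum (fun n => x' n x • y n) (S x)) :
    nuclearNorm S ≤ ∑' n, ‖x' n‖ * ‖y n‖ :=
  csInf_le ⟨0, fun _ ⟨_, _, _, _, hc⟩ => hc ▸ tsum_nonneg fun _ => by positivity⟩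
    ⟨x', y, hsum, hrep, rfl⟩

theorem isNuclear_comp_and_nuclearNorm_comp_le_tsum {S : X →L[ℝ] Y} {x' : ℕ → X →L[ℝ] ℝ}
    {y : ℕ → Y} (hsum : Summable fun n => ‖x' n‖ * ‖y n‖)
    (hrep : ∀ x, HasSum (fun n => x' n x • y n) (S x)) (A : Z →L[ℝ] X) :
    IsNuclear (S.comp A) ∧ nuclearNorm (S.comp A) ≤ ‖A‖ * ∑' n, ‖x' n‖ * ‖y n‖ := by
  have hle : ∀ n, ‖(x' n).comp A‖ * ‖y n‖ ≤ ‖A‖ * (‖x' n‖ * ‖y n‖) := fun n =>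
    calc ‖(x' n).comp A‖ * ‖y n‖ ≤ ‖x' n‖ * ‖A‖ * ‖y n‖ := by
          gcongr; exact (x' n).opNorm_comp_le A
      _ = ‖A‖ * (‖x' n‖ * ‖y n‖) := by ring
  have hsum_comp : Summable fun n => ‖(x' n).comp A‖ * ‖y n‖ :=
    (hsum.mul_left ‖A‖).of_nonneg_of_le (fun n => by positivity) hle
  have hrep_comp : ∀ z, HasSum (fun n => (x' n).comp A z • y n) (S.comp A z) :=
    fun z => hrep (A z)
  refine ⟨⟨_, y, hsum_comp, hrep_comp⟩, ?_⟩
  calc nuclearNorm (S.comp A) ≤ ∑' n, ‖(x' n).comp A‖ * ‖y n‖ :=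
        nuclearNorm_le_tsum hsum_comp hrep_comp
    _ ≤ ∑' n, ‖A‖ * (‖x' n‖ * ‖y n‖) := hsum_comp.tsum_le_tsum hle (hsum.mul_left ‖A‖)
    _ = ‖A‖ * ∑' n, ‖x' n‖ * ‖y n‖ := tsum_mul_left

theorem IsNuclear.comp {S : X →L[ℝ] Y} (hS : IsNuclear S) (A : Z →L[ℝ] X) :
    IsNuclear (S.comp A) :=
  let ⟨_, _, hsum, hrep⟩ := hS
  (isNuclear_comp_and_nuclearNorm_comp_le_tsum hsum hrep A).1

theorem nuclearNorm_comp_le {S : X →L[ℝ] Y} (hS : IsNuclear S) (A : Z →L[ℝ] X) :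
    nuclearNorm (S.comp A) ≤ ‖A‖ * nuclearNorm S := by
  obtain ⟨x', y, hsum, hrep⟩ := hS
  unfold nuclearNorm
  rw [← smul_eq_mul, ← Real.sInf_smul_of_nonneg (norm_nonneg A)]
  refine le_csInf (Set.smul_set_nonempty.2 ⟨_, x', y, hsum, hrep, rfl⟩) ?_
  rintro _ ⟨_, ⟨x'', y'', hsum', hrep', rfl⟩, rfl⟩
  exact (isNuclear_comp_and_nuclearNorm_comp_le_tsum hsum' hrep' A).2

end Nuclear

section Sharp

variable {Ω : Type*} [TopologicalSpace Ω] [CompactSpace Ω]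
  {X Y : Type*} [NormedAddCommGroup X] [NormedSpace ℝ X] [NormedAddCommGroup Y] [NormedSpace ℝ Y]

noncomputable def tensorCLM (f : C(Ω, ℝ)) : X →L[ℝ] C(Ω, X) :=
  LinearMap.mkContinuous
    { toFun := tensor f
      map_add' := fun _ _ => ContinuousMap.ext fun _ => smul_add _ _ _
      map_smul' := fun _ _ => ContinuousMap.ext fun _ => smul_comm _ _ _ }
    ‖f‖ (norm_tensor_le f)

theorem norm_tensorCLM_le (f : C(Ω, ℝ)) : ‖(tensorCLM f : X →L[ℝ] C(Ω, X))‖ ≤ ‖f‖ :=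
  LinearMap.mkContinuous_norm_le _ (norm_nonneg f) _

theorem sharp_eq_comp_tensorCLM (T : C(Ω, X) →L[ℝ] Y) (f : C(Ω, ℝ)) :
    sharp T f = T.comp (tensorCLM f) :=
  rfl

end Sharp

theorem nuclearNorm_sharp_le_general {Ω : Type*} [TopologicalSpace Ω] [CompactSpace Ω]
    {E F : Type*} [NormedAddCommGroup E] [NormedSpace ℝ E]
    [NormedAddCommGroup F] [NormedSpace ℝ F]
    (T : C(Ω, E) →L[ℝ] F) (hT : IsNuclear T) (f : C(Ω, ℝ)) :
    IsNuclear (sharp T f) ∧ nuclearNorm (sharp T f) ≤ ‖f‖ * nuclearNorm T := by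
  rw [sharp_eq_comp_tensorCLM]
  refine ⟨hT.comp _, ?_⟩
  calc nuclearNorm (T.comp (tensorCLM f)) ≤ ‖tensorCLM f‖ * nuclearNorm T :=
        nuclearNorm_comp_le hT _
    _ ≤ ‖f‖ * nuclearNorm T := by gcongr; exacts [nuclearNorm_nonneg T, norm_tensorCLM_le f]

/-- Quantitative Theorem 3: `T^#(f)` is nuclear and
`‖T^#(f)‖_nuc ≤ ‖f‖·‖T‖_nuc`. -/
theorem nuclearNorm_sharp_le {Ω : Type*} [TopologicalSpace Ω] [CompactSpace Ω] [T2Space Ω]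
    {E F : Type*} [NormedAddCommGroup E] [NormedSpace ℝ E] [CompleteSpace E]
    [NormedAddCommGroup F] [NormedSpace ℝ F] [CompleteSpace F]
    (T : C(Ω, E) →L[ℝ] F) (hT : IsNuclear T) (f : C(Ω, ℝ)) :
    IsNuclear (sharp T f) ∧ nuclearNorm (sharp T f) ≤ ‖f‖ * nuclearNorm T :=
  nuclearNorm_sharp_le_general T hT f
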